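/- arXiv:1302.3613 — 9 statements merged into one kernel-verified Lean document; each statement's English description precedes it below -/
import Mathlib

section
/- The limit as x tends to 0 of Γ(x) - 1/x equals -γ, where γ is the Euler–Mascheroni constant. -/
theorem Real.Gamma_sub_one_div_eq_slope {x : ℝ} (hx : x ≠ 0) :
    Real.Gamma x - 1 / x = x⁻¹ • (Real.Gamma (1 + x) - Real.Gamma 1) := by
  rw [add_comm, Real.Gamma_add_one hx, Real.Gamma_one, smul_eq_mul]
  field_simp

theorem stmt_0 :
    Filter.Tendsto (fun x : ℝ => Real.Gamma x - 1 / x) (nhdsWithin 0 {0}ᶜ)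
      (nhds (-Real.eulerMascheroniConstant)) := by
  refine Real.hasDerivAt_Gamma_one.tendsto_slope_zero.congr' ?_
  filter_upwards [self_mem_nhdsWithin] with x hx
  exact (Real.Gamma_sub_one_div_eq_slope hx).symm
end

section
/- The limit as x tends to infinity of x - Γ(1/x) equals γ. -/
/-!
Put `h = 1/x`. The functional equation `Γ(1 + h) = h Γ(h)` and `Γ(1) = 1` turn `x - Γ(1/x)` into
`-(Γ(1 + h) - Γ(1)) / h`, a difference quotient tending to `-Γ'(1) = γ` as `h → 0⁺`.
-/

open Filter Topology

namespace Real

lemma inv_sub_Gamma_eq_neg_slope {h : ℝ} (hh : h ≠ 0) :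
    h⁻¹ - Gamma h = -(h⁻¹ * (Gamma (1 + h) - Gamma 1)) := by
  rw [add_comm, Gamma_add_one hh, Gamma_one]
  field_simp
  ring

lemma tendsto_inv_sub_Gamma_nhdsNE_zero :
    Tendsto (fun h : ℝ => h⁻¹ - Gamma h) (𝓝[≠] 0) (𝓝 eulerMascheroniConstant) := by
  have hslope := hasDerivAt_Gamma_one.tendsto_slope_zero.neg
  rw [neg_neg] at hslope
  refine hslope.congr' ?_
  filter_upwards [self_mem_nhdsWithin] with h hh
  simpa using (inv_sub_Gamma_eq_neg_slope hh).symm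

end Real

theorem stmt_1 :
    Filter.Tendsto (fun x : ℝ => x - Real.Gamma (1 / x)) Filter.atTop
      (nhds Real.eulerMascheroniConstant) := by
  have hinv : Tendsto (fun x : ℝ => x⁻¹) atTop (𝓝[≠] 0) :=
    tendsto_inv_atTop_nhdsGT_zero.mono_right (nhdsGT_le_nhdsNE 0)
  simpa [Function.comp_def] using Real.tendsto_inv_sub_Gamma_nhdsNE_zero.comp hinv
end

section
/- The limit as x tends to 0 of 1/x + Γ(-1 + x) equals γ - 1. -/
/-! Near `0`, `1/x + Γ(x - 1) = (Γ(1 + x) + x - 1) / (x (x - 1))` by the functional equation.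
The numerator vanishes at `0` with derivative `Γ'(1) + 1 = 1 - γ`, so the quotient tends to
`(1 - γ) / (0 - 1) = γ - 1`. -/

open Filter Topology

namespace Real

theorem Gamma_one_add_eq_mul_Gamma_neg_one_add {x : ℝ} (h0 : x ≠ 0) (h1 : x ≠ 1) :
    Gamma (1 + x) = x * (x - 1) * Gamma (-1 + x) := by
  have hx : Gamma (1 + x) = x * Gamma x := by rw [add_comm]; exact Gamma_add_one h0
  have hx1 : Gamma x = (x - 1) * Gamma (x - 1) := by
    simpa using Gamma_add_one (sub_ne_zero.mpr h1)
  rw [hx, hx1, neg_add_eq_sub, mul_assoc]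

theorem one_div_add_Gamma_neg_one_add {x : ℝ} (h0 : x ≠ 0) (h1 : x ≠ 1) :
    1 / x + Gamma (-1 + x) = (Gamma (1 + x) + x - 1) / x * (x - 1)⁻¹ := by
  have h1' : x - 1 ≠ 0 := sub_ne_zero.mpr h1
  rw [Gamma_one_add_eq_mul_Gamma_neg_one_add h0 h1]
  field_simp
  ring

theorem hasDerivAt_Gamma_one_add_add_sub_one :
    HasDerivAt (fun x => Gamma (1 + x) + x - 1) (1 - eulerMascheroniConstant) 0 := by
  have hGamma : HasDerivAt (fun x => Gamma (1 + x)) (-eulerMascheroniConstant) 0 := by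
    simpa using HasDerivAt.comp_const_add 1 0 (by simpa using hasDerivAt_Gamma_one)
  simpa [neg_add_eq_sub] using (hGamma.add (hasDerivAt_id 0)).sub_const 1

theorem tendsto_Gamma_one_add_add_sub_one_div :
    Tendsto (fun x => (Gamma (1 + x) + x - 1) / x) (𝓝[≠] 0)
      (𝓝 (1 - eulerMascheroniConstant)) := by
  refine (hasDerivAt_iff_tendsto_slope_zero.mp hasDerivAt_Gamma_one_add_add_sub_one).congr
    fun x => ?_
  simp [div_eq_inv_mul]

end Real

theorem stmt_2 :
    Filter.Tendsto (fun x : ℝ => 1 / x + Real.Gamma (-1 + x)) (nhdsWithin 0 {0}ᶜ)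
      (nhds (Real.eulerMascheroniConstant - 1)) := by
  have hinv : Tendsto (fun x : ℝ => (x - 1)⁻¹) (𝓝[≠] 0) (𝓝 (-1)) := by
    have : ContinuousAt (fun x : ℝ => (x - 1)⁻¹) 0 := by fun_prop (disch := norm_num)
    simpa using this.tendsto.mono_left nhdsWithin_le_nhds
  have hlim := Real.tendsto_Gamma_one_add_add_sub_one_div.mul hinv
  rw [show (1 - Real.eulerMascheroniConstant) * -1 = Real.eulerMascheroniConstant - 1 by ring]
    at hlim
  have hne_one : ∀ᶠ x : ℝ in 𝓝[≠] 0, x ≠ 1 :=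
    nhdsWithin_le_nhds (isOpen_ne.mem_nhds zero_ne_one)
  refine hlim.congr' ?_
  filter_upwards [self_mem_nhdsWithin, hne_one] with x hx0 hx1
  exact (Real.one_div_add_Gamma_neg_one_add hx0 hx1).symm
end

section
/- The limit as x tends to 0 of -1/(2x) + Γ(-2 + x) equals -γ/2 + 3/4. -/
/-!
`Γ x - 1/x` is the difference quotient `(Γ (1 + x) - Γ 1) / x`, so it tends to `Γ' 1 = -γ` as
`x → 0`. The functional equation `Γ s = Γ (s + 1) / s` carries such an expansion from the pole at
`-n` to the one at `-(n + 1)`, and by induction the constant term of `Γ` at `-n` is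
`(-1)ⁿ / n! * (Hₙ - γ)`. For `n = 2` this is `(3/2 - γ) / 2`.
-/

open Filter Topology Nat

namespace Real

theorem tendsto_Gamma_sub_inv_nhdsNE_zero :
    Tendsto (fun x : ℝ => Gamma x - x⁻¹) (𝓝[≠] 0) (𝓝 (-eulerMascheroniConstant)) := by
  refine (hasDerivAt_iff_tendsto_slope_zero.mp hasDerivAt_Gamma_one).congr' ?_
  filter_upwards [self_mem_nhdsWithin] with x (hx : x ≠ 0)
  rw [add_comm, Gamma_add_one hx, Gamma_one, smul_eq_mul]
  field_simp

theorem tendsto_Gamma_sub_add_div_of_tendsto {a c L : ℝ} (ha : a ≠ 0)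
    (h : Tendsto (fun x : ℝ => Gamma (x - a + 1) - c / x) (𝓝[≠] 0) (𝓝 L)) :
    Tendsto (fun x : ℝ => Gamma (x - a) + c / (a * x)) (𝓝[≠] 0) (𝓝 (-(L + c / a) / a)) := by
  have hcont : ContinuousAt (fun x : ℝ => x - a) 0 := by fun_prop
  have ha' : (0 : ℝ) - a ≠ 0 := by simpa using ha
  have hlim : Tendsto (fun x : ℝ => (Gamma (x - a + 1) - c / x) / (x - a) + c / (a * (x - a)))
      (𝓝[≠] 0) (𝓝 (L / (0 - a) + c / (a * (0 - a)))) :=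
    (h.div (hcont.tendsto.mono_left nhdsWithin_le_nhds) ha').add
      (tendsto_const_nhds.div ((tendsto_const_nhds.mul hcont.tendsto).mono_left
        nhdsWithin_le_nhds) (mul_ne_zero ha ha'))
  have hval : L / (0 - a) + c / (a * (0 - a)) = -(L + c / a) / a := by
    field_simp
    ring
  rw [← hval]
  refine hlim.congr' ?_
  filter_upwards [self_mem_nhdsWithin, nhdsWithin_le_nhds (eventually_ne_nhds ha.symm)]
    with x (hx0 : x ≠ 0) hxa
  have hxa' : x - a ≠ 0 := sub_ne_zero.mpr hxa
  rw [Gamma_add_one hxa']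
  field_simp
  ring

theorem tendsto_Gamma_sub_nat_sub_div (n : ℕ) :
    Tendsto (fun x : ℝ => Gamma (x - n) - (-1) ^ n / (n ! * x)) (𝓝[≠] 0)
      (𝓝 ((-1) ^ n / n ! * (harmonic n - eulerMascheroniConstant))) := by
  induction n with
  | zero => simpa using tendsto_Gamma_sub_inv_nhdsNE_zero
  | succ n ih =>
    have hn : (n + 1 : ℝ) ≠ 0 := by positivity
    have ih' : Tendsto (fun x : ℝ => Gamma (x - (n + 1) + 1) - (-1) ^ n / n ! / x) (𝓝[≠] 0)
        (𝓝 ((-1) ^ n / n ! * (harmonic n - eulerMascheroniConstant))) := by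
      simpa only [sub_add, add_sub_cancel_right, div_div] using ih
    convert tendsto_Gamma_sub_add_div_of_tendsto hn ih' using 2 with x
    · push_cast [factorial_succ, pow_succ]
      field_simp
      ring
    · push_cast [factorial_succ, harmonic_succ]
      field_simp
      ring

end Real

theorem stmt_3 :
    Filter.Tendsto (fun x : ℝ => -1 / (2 * x) + Real.Gamma (-2 + x)) (nhdsWithin 0 {0}ᶜ)
      (nhds (-Real.eulerMascheroniConstant / 2 + 3 / 4)) := by
  convert Real.tendsto_Gamma_sub_nat_sub_div 2 using 2 with x
  · rw [neg_add_eq_sub]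
    norm_num
    ring
  · norm_num [harmonic]
    ring
end

section
/- The limit as x tends to 0 of (1/x - Γ(x)) / (-1 + x·Γ(-x)) equals -γ/2. -/
/-! Since `Γ(1 + x) = x Γ(x)`, the numerator `1/x - Γ(x)` is minus the difference quotient of `Γ`
at `1`, so it tends to `-Γ'(1) = γ`; likewise `x Γ(-x) = -Γ(1 - x) → -1`, so the denominator
tends to `-2`. -/

open Real Filter Topology

lemma Real.mul_Gamma_neg {x : ℝ} (hx : x ≠ 0) : x * Gamma (-x) = -Gamma (1 - x) := by
  rw [sub_eq_neg_add, Gamma_add_one (neg_ne_zero.mpr hx)]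
  ring

lemma Real.tendsto_inv_sub_Gamma_nhdsNE_zero_s10 :
    Tendsto (fun x : ℝ => 1 / x - Gamma x) (𝓝[≠] 0) (𝓝 eulerMascheroniConstant) := by
  have hslope := (hasDerivAt_iff_tendsto_slope_zero.mp hasDerivAt_Gamma_one).neg
  rw [neg_neg] at hslope
  refine hslope.congr' ?_
  filter_upwards [self_mem_nhdsWithin] with x (hx : x ≠ 0)
  rw [add_comm, Gamma_add_one hx, Gamma_one, smul_eq_mul]
  field_simp
  ring

lemma Real.tendsto_mul_Gamma_neg_nhdsNE_zero :
    Tendsto (fun x : ℝ => x * Gamma (-x)) (𝓝[≠] 0) (𝓝 (-1)) := by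
  have hcont : ContinuousAt (fun x : ℝ => -Gamma (1 - x)) 0 :=
    (hasDerivAt_Gamma_one.continuousAt.comp_of_eq (by fun_prop) (sub_zero 1)).neg
  have hlim := hcont.tendsto.mono_left (nhdsWithin_le_nhds (s := {0}ᶜ))
  simp only [sub_zero, Gamma_one] at hlim
  refine hlim.congr' ?_
  filter_upwards [self_mem_nhdsWithin] with x (hx : x ≠ 0)
  exact (mul_Gamma_neg hx).symm

theorem stmt_10 :
    Filter.Tendsto
      (fun x : ℝ => (1 / x - Real.Gamma x) / (-1 + x * Real.Gamma (-x)))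
      (nhdsWithin 0 {0}ᶜ) (nhds (-Real.eulerMascheroniConstant / 2)) := by
  rw [show -eulerMascheroniConstant / 2 = eulerMascheroniConstant / (-1 + -1) by ring]
  exact tendsto_inv_sub_Gamma_nhdsNE_zero_s10.div
    (tendsto_const_nhds.add tendsto_mul_Gamma_neg_nhdsNE_zero) (by norm_num)
end

section
/- For every natural number n ≥ 1, the limit as x tends to 0 of 1/x · [1 + (1/x - Γ(-n + x)) / (-1/x - Γ(-n - x))] equals (-1)^(n+1) · 2/(n! + (-1)^(n+1)) · (γ - H_n). -/
/-!
Near `x = 0` the function `x ↦ x · Γ(x - n)` agrees with the smooth function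
`G x = Γ(x + 1) / ((x - 1) ⋯ (x - n))`, so that `Γ(-n ± x) = ± G(±x) / x`. Substituting, the
expression under the limit becomes `(G(-x) - G(x)) / x / (G(-x) - 1)`, which tends to
`-2 G'(0) / (G(0) - 1)`. Finally `G(0) = (-1)ⁿ / n!` and, by logarithmic differentiation,
`G'(0) / G(0) = -γ + H_n`.
-/

open Real Filter Topology Finset

lemma neg_one_pow_sq {R : Type*} [Monoid R] [HasDistribNeg R] (n : ℕ) :
    ((-1 : R) ^ n) ^ 2 = 1 := by
  rw [← pow_mul, mul_comm, pow_mul, neg_one_sq, one_pow]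

noncomputable def prodSubSucc (n : ℕ) (x : ℝ) : ℝ := ∏ k ∈ range n, (x - (k + 1))

lemma prodSubSucc_succ (n : ℕ) (x : ℝ) :
    prodSubSucc (n + 1) x = prodSubSucc n x * (x - (n + 1)) :=
  prod_range_succ _ _

lemma prodSubSucc_zero_right (n : ℕ) : prodSubSucc n 0 = (-1) ^ n * n.factorial := by
  induction n with
  | zero => simp [prodSubSucc]
  | succ n ih =>
    rw [prodSubSucc_succ, ih, Nat.factorial_succ]
    push_cast
    ring

lemma prodSubSucc_ne_zero {n : ℕ} {x : ℝ} (hx : x < 1) : prodSubSucc n x ≠ 0 :=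
  prod_ne_zero_iff.mpr fun k _ ↦ by linarith [(k.cast_nonneg : (0 : ℝ) ≤ k)]

lemma hasDerivAt_prodSubSucc (n : ℕ) :
    HasDerivAt (prodSubSucc n) ((-1) ^ (n + 1) * n.factorial * harmonic n) 0 := by
  induction n with
  | zero =>
    rw [show prodSubSucc 0 = fun _ ↦ 1 from funext fun _ ↦ prod_range_zero _]
    simpa using hasDerivAt_const (0 : ℝ) (1 : ℝ)
  | succ n ih =>
    rw [show prodSubSucc (n + 1) = _ from funext (prodSubSucc_succ n)]
    refine (ih.mul ((hasDerivAt_id' 0).sub_const ((n : ℝ) + 1))).congr_deriv ?_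
    rw [prodSubSucc_zero_right, harmonic_succ, Nat.factorial_succ]
    push_cast
    field_simp
    ring

lemma Gamma_sub_nat_mul (n : ℕ) {x : ℝ} (hx : ∀ k : ℕ, k ≤ n → x ≠ k) :
    Gamma (x - n) * (x * prodSubSucc n x) = Gamma (x + 1) := by
  induction n with
  | zero => simp [prodSubSucc, Gamma_add_one (by simpa using hx 0 le_rfl), mul_comm]
  | succ n ih =>
    have hx' : x - (n + 1) ≠ 0 := sub_ne_zero.mpr (by exact_mod_cast hx (n + 1) le_rfl)
    have hGamma : Gamma (x - n) = (x - (n + 1)) * Gamma (x - (n + 1)) := by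
      rw [← Gamma_add_one hx']
      ring_nf
    rw [← ih fun k hk ↦ hx k (hk.trans n.le_succ), hGamma, prodSubSucc_succ]
    push_cast
    ring

/-- The regular part of `x ↦ x · Γ(x - n)` at `x = 0`. -/
noncomputable def gammaRegPart (n : ℕ) (x : ℝ) : ℝ := Gamma (x + 1) / prodSubSucc n x

lemma gammaRegPart_zero (n : ℕ) : gammaRegPart n 0 = (-1) ^ n / n.factorial := by
  rw [gammaRegPart, prodSubSucc_zero_right, zero_add, Gamma_one]
  have hfac : (n.factorial : ℝ) ≠ 0 := by positivity
  field_simp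
  exact (neg_one_pow_sq n).symm

lemma hasDerivAt_gammaRegPart (n : ℕ) :
    HasDerivAt (gammaRegPart n)
      ((-1) ^ n * (harmonic n - eulerMascheroniConstant) / n.factorial) 0 := by
  have hGamma : HasDerivAt (fun x ↦ Gamma (x + 1)) (-eulerMascheroniConstant) 0 :=
    (by simpa using hasDerivAt_Gamma_one : HasDerivAt Gamma _ (0 + 1)).comp_add_const
  have hP : prodSubSucc n 0 ≠ 0 := prodSubSucc_ne_zero one_pos
  refine (hGamma.div (hasDerivAt_prodSubSucc n) hP).congr_deriv ?_
  rw [prodSubSucc_zero_right, zero_add, Gamma_one]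
  have hsq := neg_one_pow_sq (R := ℝ) n
  have hfac : (n.factorial : ℝ) ≠ 0 := by positivity
  field_simp
  linear_combination -(-1 : ℝ) ^ n * (harmonic n - eulerMascheroniConstant) * hsq

lemma Gamma_neg_nat_add {n : ℕ} {x : ℝ} (hx₀ : x ≠ 0) (hx₁ : |x| < 1) :
    Gamma (-n + x) = gammaRegPart n x / x := by
  have hx : ∀ k : ℕ, k ≤ n → x ≠ k := by
    rintro (_ | k) -
    · simpa using hx₀
    · have := le_abs_self x
      push_cast
      linarith [(k.cast_nonneg : (0 : ℝ) ≤ k)]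
  rw [gammaRegPart, ← Gamma_sub_nat_mul n hx, neg_add_eq_sub]
  field_simp [prodSubSucc_ne_zero (lt_of_le_of_lt (le_abs_self x) hx₁)]

lemma HasDerivAt.tendsto_sub_comp_neg_div {f : ℝ → ℝ} {f' : ℝ} (hf : HasDerivAt f f' 0) :
    Tendsto (fun x ↦ (f (-x) - f x) / x) (𝓝[≠] 0) (𝓝 (-2 * f')) := by
  have hslope := hasDerivAt_iff_tendsto_slope_zero.mp hf
  have hneg : Tendsto (fun x : ℝ ↦ -x) (𝓝[≠] 0) (𝓝[≠] 0) := by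
    refine tendsto_nhdsWithin_of_tendsto_nhds_of_eventually_within _ ?_
      (eventually_nhdsWithin_of_forall fun x hx ↦ neg_ne_zero.mpr hx)
    simpa using (tendsto_neg (0 : ℝ)).mono_left nhdsWithin_le_nhds
  have h := (hslope.comp hneg).neg.sub hslope
  simp only [Function.comp_def, zero_add, smul_eq_mul] at h
  convert h using 2 with x
  · ring
  · ring

lemma HasDerivAt.tendsto_sub_comp_neg_div_div_sub_one {f : ℝ → ℝ} {f' : ℝ} (hf : HasDerivAt f f' 0) (hf₀ : f 0 ≠ 1) :
    Tendsto (fun x ↦ (f (-x) - f x) / x / (f (-x) - 1)) (𝓝[≠] 0)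
      (𝓝 (-2 * f' / (f 0 - 1))) := by
  have hcont : Tendsto (fun x ↦ f (-x) - 1) (𝓝[≠] 0) (𝓝 (f 0 - 1)) := by
    have := hf.continuousAt.tendsto.comp (by simpa using tendsto_neg (0 : ℝ))
    simpa using (this.mono_left nhdsWithin_le_nhds).sub_const 1
  exact hf.tendsto_sub_comp_neg_div.div hcont (sub_ne_zero.mpr hf₀)

lemma one_div_mul_one_add_div_eq {a b x : ℝ} (hx : x ≠ 0) (hb : b ≠ 1) :
    1 / x * (1 + (1 / x - a / x) / (-1 / x - b / -x)) = (b - a) / x / (b - 1) := by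
  have hb' : b - 1 ≠ 0 := sub_ne_zero.mpr hb
  rw [div_neg, sub_neg_eq_add, ← add_div, neg_add_eq_sub]
  field_simp
  ring

lemma factorial_ne_neg_one_pow {n : ℕ} (hn : 1 ≤ n) : (n.factorial : ℝ) ≠ (-1) ^ n := by
  rcases n.even_or_odd with he | ho
  · have h2 : 2 ≤ n := by rcases he with ⟨k, rfl⟩; omega
    rw [he.neg_one_pow]
    exact_mod_cast ((Nat.self_le_factorial n).trans_lt' h2).ne'
  · rw [ho.neg_one_pow]
    exact (neg_one_lt_zero.trans_le n.factorial.cast_nonneg).ne'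

theorem stmt_11 (n : ℕ) (hn : 1 ≤ n) :
    Filter.Tendsto
      (fun x : ℝ => 1 / x *
        (1 + (1 / x - Real.Gamma (-(n : ℝ) + x)) / (-1 / x - Real.Gamma (-(n : ℝ) - x))))
      (nhdsWithin 0 {0}ᶜ)
      (nhds ((-1) ^ (n + 1) * (2 / (n.factorial + (-1 : ℝ) ^ (n + 1))) *
        (Real.eulerMascheroniConstant - (harmonic n : ℝ)))) := by
  have hfac : (n.factorial : ℝ) ≠ 0 := by positivity
  have hdiff : (-1 : ℝ) ^ n - n.factorial ≠ 0 := sub_ne_zero.mpr (factorial_ne_neg_one_pow hn).symm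
  have hG₀ : gammaRegPart n 0 ≠ 1 := by
    rw [gammaRegPart_zero, Ne, div_eq_one_iff_eq hfac]
    exact (factorial_ne_neg_one_pow hn).symm
  have hlim := (hasDerivAt_gammaRegPart n).tendsto_sub_comp_neg_div_div_sub_one hG₀
  have hcont : ContinuousAt (fun x ↦ gammaRegPart n (-x)) 0 :=
    (hasDerivAt_gammaRegPart n).continuousAt.comp_of_eq continuous_neg.continuousAt neg_zero
  convert hlim.congr' ?_ using 2
  · rw [gammaRegPart_zero, div_sub_one hfac, pow_succ, mul_neg_one, ← sub_eq_add_neg,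
      ← neg_sub ((-1 : ℝ) ^ n)]
    field_simp
    ring
  · filter_upwards [self_mem_nhdsWithin,
      nhdsWithin_le_nhds (Metric.ball_mem_nhds (0 : ℝ) one_pos),
      nhdsWithin_le_nhds (hcont.eventually_ne (by simpa using hG₀))] with x hx₀ hx₁ hG
    have hx₁ : |x| < 1 := by simpa using hx₁
    have hplus : Gamma (-n + x) = gammaRegPart n x / x := Gamma_neg_nat_add hx₀ hx₁
    have hminus : Gamma (-n - x) = gammaRegPart n (-x) / -x := by
      simpa [sub_eq_add_neg] using
        Gamma_neg_nat_add (n := n) (neg_ne_zero.mpr hx₀) (by rwa [abs_neg])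
    rw [hplus, hminus]
    exact (one_div_mul_one_add_div_eq hx₀ hG).symm
end

section
/- For every natural number n, the function x ↦ Γ(-n + x) - (-1)^n/(n! x) extends continuously to x = 0, with value at 0 equal to ((-1)^n/n!) · (H_n - γ). -/
/-!
Near `x = 0` we have `Γ(x - n) = F n x / x` with `F n x = Γ(x + 1) / ∏_{k=1}^{n} (x - k)` smooth at `0`,
so the function in question is the difference quotient `(F n x - F n 0) / x` and extends continuously
with value `(F n)'(0)`. The recursion `F (n + 1) x = F n x / (x - (n + 1))` gives
`F n 0 = (-1)^n / n!` and, by logarithmic differentiation, `(F n)'(0) = F n 0 * (H_n - γ)`,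
starting from `Γ'(1) = -γ`.
-/

open Real

/-- `x * Γ(x - n)` for `x ≠ 0`, written so that it is visibly differentiable at `0`. -/
noncomputable def gammaResidueFactor : ℕ → ℝ → ℝ
  | 0, x => Gamma (x + 1)
  | n + 1, x => gammaResidueFactor n x / (x - (n + 1))

namespace gammaResidueFactor

theorem eq_mul_Gamma_sub (n : ℕ) {x : ℝ} (hx : x ≠ 0) :
    gammaResidueFactor n x = x * Gamma (x - n) := by
  induction n with
  | zero => simpa [gammaResidueFactor] using Gamma_add_one hx
  | succ n ih =>
    rw [gammaResidueFactor, ih]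
    by_cases hpole : x - (n + 1) = 0
    -- junk on both sides: division by zero on the left, `Gamma 0 = 0` on the right
    · rw [hpole, div_zero, Nat.cast_succ, hpole, Gamma_zero, mul_zero]
    · have hrec : Gamma (x - n) = (x - (n + 1)) * Gamma (x - (n + 1)) := by
        rw [← Gamma_add_one hpole]; ring_nf
      rw [hrec, Nat.cast_succ]
      field_simp

theorem apply_zero (n : ℕ) : gammaResidueFactor n 0 = (-1) ^ n / n.factorial := by
  induction n with
  | zero => simp [gammaResidueFactor]
  | succ n ih =>
    rw [gammaResidueFactor, ih, zero_sub, Nat.factorial_succ, pow_succ]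
    push_cast
    field_simp

theorem hasDerivAt_zero (n : ℕ) :
    HasDerivAt (gammaResidueFactor n)
      (gammaResidueFactor n 0 * ((harmonic n : ℝ) - eulerMascheroniConstant)) 0 := by
  induction n with
  | zero =>
    have h := (zero_add (1 : ℝ) ▸ hasDerivAt_Gamma_one).comp_add_const (0 : ℝ) 1
    simpa [gammaResidueFactor] using h
  | succ n ih =>
    have hden : (0 : ℝ) - (n + 1) ≠ 0 := by linarith [(n.cast_nonneg : (0 : ℝ) ≤ n)]
    refine (ih.div ((hasDerivAt_id' 0).sub_const ((n : ℝ) + 1)) hden).congr_deriv ?_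
    simp only [gammaResidueFactor, harmonic_succ, Rat.cast_add, Rat.cast_inv, Rat.cast_natCast,
      Nat.cast_succ]
    field_simp
    ring

end gammaResidueFactor

theorem stmt_13 (n : ℕ) :
    ∃ g : ℝ → ℝ, ContinuousAt g 0 ∧
      g 0 = (-1) ^ n / (n.factorial : ℝ) * ((harmonic n : ℝ) - Real.eulerMascheroniConstant) ∧
      ∀ x : ℝ, x ≠ 0 →
        g x = Real.Gamma (-(n : ℝ) + x) - (-1) ^ n / (n.factorial * x) := by
  have hF := gammaResidueFactor.hasDerivAt_zero n
  rw [gammaResidueFactor.apply_zero] at hF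
  refine ⟨Function.update (slope (gammaResidueFactor n) 0) 0 _, ?_, Function.update_self ..,
    fun x hx => ?_⟩
  · exact continuousAt_update_same.mpr (hasDerivAt_iff_tendsto_slope.mp hF)
  · rw [Function.update_of_ne hx, slope_def_field, sub_zero, sub_div, neg_add_eq_sub,
      gammaResidueFactor.eq_mul_Gamma_sub n hx, gammaResidueFactor.apply_zero, div_div]
    field_simp
end

section
/- The limit as x tends to 0 of (1/x - Γ(x)) + (1/x + Γ(-1 + x)) equals 2γ - 1. -/
/-!
Put `s(x) = (Γ(x + 1) - 1) / x`, the difference quotient of `Γ` at `1`, so `s(x) → Γ'(1) = -γ`.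
The functional equation gives `1/x - Γ(x) = -s(x)` and `1/x + Γ(x - 1) = (s(x) + 1) / (x - 1)`,
hence the two summands tend to `γ` and `(1 - γ) / (0 - 1) = γ - 1`.
-/

open Filter Topology

namespace Real

theorem tendsto_Gamma_one_add_sub_one_div :
    Tendsto (fun x : ℝ => (Gamma (1 + x) - 1) / x) (𝓝[≠] 0) (𝓝 (-eulerMascheroniConstant)) := by
  refine hasDerivAt_Gamma_one.tendsto_slope_zero.congr fun x => ?_
  rw [Gamma_one, smul_eq_mul, inv_mul_eq_div]

theorem one_div_sub_Gamma {x : ℝ} (hx : x ≠ 0) :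
    1 / x - Gamma x = -((Gamma (1 + x) - 1) / x) := by
  rw [add_comm, Gamma_add_one hx]
  field_simp
  ring

theorem one_div_add_Gamma_neg_one_add_s15 {x : ℝ} (hx : x ≠ 0) (hx₁ : x - 1 ≠ 0) :
    1 / x + Gamma (-1 + x) = ((Gamma (1 + x) - 1) / x + 1) / (x - 1) := by
  have hΓ : Gamma x = (x - 1) * Gamma (-1 + x) := by
    rw [neg_add_eq_sub, ← Gamma_add_one hx₁, sub_add_cancel]
  rw [add_comm 1, Gamma_add_one hx, hΓ]
  field_simp
  ring

theorem tendsto_one_div_sub_Gamma :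
    Tendsto (fun x : ℝ => 1 / x - Gamma x) (𝓝[≠] 0) (𝓝 eulerMascheroniConstant) := by
  rw [← neg_neg eulerMascheroniConstant]
  exact tendsto_Gamma_one_add_sub_one_div.neg.congr' <|
    eventually_mem_nhdsWithin.mono fun x hx => (one_div_sub_Gamma hx).symm

theorem tendsto_one_div_add_Gamma_neg_one_add :
    Tendsto (fun x : ℝ => 1 / x + Gamma (-1 + x)) (𝓝[≠] 0)
      (𝓝 (eulerMascheroniConstant - 1)) := by
  have hid : Tendsto (fun x : ℝ => x) (𝓝[≠] 0) (𝓝 0) := tendsto_nhdsWithin_of_tendsto_nhds tendsto_id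
  have hlim := (tendsto_Gamma_one_add_sub_one_div.add_const 1).div (hid.sub_const 1) (by norm_num)
  have hne : ∀ᶠ x : ℝ in 𝓝[≠] 0, x ≠ 0 ∧ x - 1 ≠ 0 :=
    eventually_mem_nhdsWithin.and <| eventually_nhdsWithin_of_eventually_nhds <|
      (continuous_id.sub continuous_const).continuousAt.eventually_ne (by norm_num)
  convert hlim.congr' (hne.mono fun x hx => (one_div_add_Gamma_neg_one_add_s15 hx.1 hx.2).symm) using 2
  ring

end Real

theorem stmt_15 :
    Filter.Tendsto
      (fun x : ℝ => (1 / x - Real.Gamma x) + (1 / x + Real.Gamma (-1 + x)))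
      (nhdsWithin 0 {0}ᶜ)
      (nhds (2 * Real.eulerMascheroniConstant - 1)) := by
  convert Real.tendsto_one_div_sub_Gamma.add Real.tendsto_one_div_add_Gamma_neg_one_add using 2
  ring
end

section
/- For every natural number n ≥ 1, the limit as x tends to 0 of (Γ(-n + x) + Γ(-n - x)) equals 2·((-1)^(n+1)/n!)·(γ - H_n). -/
/-!
By the reflection formula, `Γ(x - n) Γ(n + 1 - x) = (-1)ⁿ π / sin (π x)`, hence
`Γ(-n + x) + Γ(-n - x) = (-1)ⁿ⁺¹ (π x / sin (π x)) · (1/Γ(n + 1 + x) - 1/Γ(n + 1 - x)) / x`.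
The first factor tends to `1`, and the second is a symmetric difference quotient of `1/Γ` at
`n + 1`, so it tends to `2 (1/Γ)'(n + 1) = -2 Γ'(n + 1) / n!² = 2 (γ - H_n) / n!`.
-/

open Filter Topology Real
open scoped Nat

theorem HasDerivAt.tendsto_symmetric_slope {𝕜 F : Type*} [NontriviallyNormedField 𝕜]
    [NormedAddCommGroup F] [NormedSpace 𝕜 F] {f : 𝕜 → F} {f' : F} {a : 𝕜}
    (hf : HasDerivAt f f' a) :
    Tendsto (fun t ↦ t⁻¹ • (f (a + t) - f (a - t))) (𝓝[≠] 0) (𝓝 ((2 : 𝕜) • f')) := by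
  have hplus : HasDerivAt (fun t ↦ f (a + t)) f' 0 := by
    simpa using HasDerivAt.comp_const_add a 0 (by simpa using hf)
  have hminus : HasDerivAt (fun t ↦ f (a - t)) (-f') 0 := by
    simpa using HasDerivAt.comp_const_sub a 0 (by simpa using hf)
  simpa [two_smul] using (hplus.sub hminus).tendsto_slope_zero

namespace Real

theorem hasDerivAt_inv_Gamma_nat (n : ℕ) :
    HasDerivAt (fun y ↦ (Gamma y)⁻¹) ((eulerMascheroniConstant - harmonic n) / n !) (n + 1) := by
  have hGamma : Gamma (n + 1) = n ! := Gamma_nat_eq_factorial n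
  refine ((hasDerivAt_Gamma_nat n).inv (by rw [hGamma]; positivity)).congr_deriv ?_
  rw [hGamma]
  field_simp
  ring

theorem Gamma_sub_nat_mul_Gamma_nat_add_one_sub (x : ℝ) (n : ℕ) :
    Gamma (x - n) * Gamma (n + 1 - x) = (-1) ^ n * π / sin (π * x) := by
  rw [show (n : ℝ) + 1 - x = 1 - (x - n) by ring, Gamma_mul_Gamma_one_sub,
    show π * (x - n) = π * x - n * π by ring, sin_sub_nat_mul_pi]
  rcases neg_one_pow_eq_or ℝ n with h | h <;> simp [h, neg_div, div_neg]

theorem Gamma_neg_nat_add_add_Gamma_neg_nat_sub {x : ℝ} (n : ℕ) (hx₀ : x ≠ 0)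
    (hx : |x| < n + 1) :
    Gamma (-n + x) + Gamma (-n - x) = (-1) ^ (n + 1) * (sinc (π * x))⁻¹ *
      (x⁻¹ * ((Gamma (n + 1 + x))⁻¹ - (Gamma (n + 1 - x))⁻¹)) := by
  obtain ⟨hx_lower, hx_upper⟩ := abs_lt.mp hx
  have hminus := Gamma_sub_nat_mul_Gamma_nat_add_one_sub (-x) n
  rw [mul_neg, sin_neg, sub_neg_eq_add] at hminus
  rw [show -(n : ℝ) + x = x - n by ring, show -(n : ℝ) - x = -x - n by ring,
    eq_div_of_mul_eq (Gamma_pos_of_pos (by linarith)).ne'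
      (Gamma_sub_nat_mul_Gamma_nat_add_one_sub x n),
    eq_div_of_mul_eq (Gamma_pos_of_pos (by linarith)).ne' hminus,
    sinc_of_ne_zero (by positivity), inv_div]
  field_simp
  ring

end Real

theorem stmt_17_general (n : ℕ) :
    Filter.Tendsto
      (fun x : ℝ => Real.Gamma (-(n : ℝ) + x) + Real.Gamma (-(n : ℝ) - x))
      (nhdsWithin 0 {0}ᶜ)
      (nhds (2 * ((-1) ^ (n + 1) / (n.factorial : ℝ)) *
        (Real.eulerMascheroniConstant - (harmonic n : ℝ)))) := by
  have hsinc : Tendsto (fun x : ℝ ↦ (sinc (π * x))⁻¹) (𝓝[≠] 0) (𝓝 1) := by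
    have := ((continuous_sinc.comp (continuous_const_mul π)).tendsto 0).inv₀ (by simp)
    simpa using this.mono_left nhdsWithin_le_nhds
  have hslope := (hasDerivAt_inv_Gamma_nat n).tendsto_symmetric_slope
  have hsmall : ∀ᶠ x in 𝓝[≠] (0 : ℝ), x ≠ 0 ∧ |x| < (n : ℝ) + 1 :=
    eventually_mem_nhdsWithin.and <| nhdsWithin_le_nhds <|
      (continuous_abs.tendsto 0).eventually (gt_mem_nhds (by rw [abs_zero]; positivity))
  have hlim := (hsinc.const_mul ((-1) ^ (n + 1))).mul hslope
  rw [show 2 * ((-1) ^ (n + 1) / (n ! : ℝ)) * (eulerMascheroniConstant - harmonic n) =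
      (-1) ^ (n + 1) * 1 * (2 : ℝ) • ((eulerMascheroniConstant - harmonic n) / n !) by
    rw [smul_eq_mul]; ring]
  refine hlim.congr' ?_
  filter_upwards [hsmall] with x ⟨hx₀, hx⟩
  rw [Gamma_neg_nat_add_add_Gamma_neg_nat_sub n hx₀ hx, smul_eq_mul]

theorem stmt_17 (n : ℕ) (hn : 1 ≤ n) :
    Filter.Tendsto
      (fun x : ℝ => Real.Gamma (-(n : ℝ) + x) + Real.Gamma (-(n : ℝ) - x))
      (nhdsWithin 0 {0}ᶜ)
      (nhds (2 * ((-1) ^ (n + 1) / (n.factorial : ℝ)) *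
        (Real.eulerMascheroniConstant - (harmonic n : ℝ)))) :=
  stmt_17_general n
end
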